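/- arXiv:2402.11157 — 2 statements merged into one kernel-verified Lean document; each statement's English description precedes it below -/
import Mathlib

section
/- Let $X_1, \dots, X_Q$ and $W$ be real-valued random variables (not necessarily independent of each other), let $a_1 > a_2 > \dots > a_Q > 0$ be positive constants, and let $Y_1, \dots, Y_Q$ be i.i.d. real-valued random variables independent of $(X_1, \dots, X_Q, W)$. Define $M_C = \max_{1 \le i \le Q}\{X_i + a_i Y_1\}$ and $M_I = \max_{1 \le i \le Q}\{X_i + a_i Y_i\}$. Then the distribution of $M_I$ first-order stochastically dominates that of $M_C$, and the distribution of $\max\{M_I, W\}$ first-order stochastically dominates that of $\max\{M_C, W\}$. -/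
/-!
Since `(X, W)` is independent of `(Y i)ᵢ`, both probabilities are integrals over the law of
`(X, W)`, so it suffices to compare them for fixed values `x, w`. With thresholds
`c i = (t - x i) / a i`, the event `M_I ≤ t` is `∀ i, Y i ≤ c i`, which lies inside `Y j ≤ c j`
for an index `j` minimising `c`; as `Y j` and `Y 0` have the same law, this has the probability of
`Y 0 ≤ c j`, i.e. of `M_C ≤ t`.
-/

open MeasureTheory ProbabilityTheory

namespace ProbabilityTheory

variable {Ω β γ : Type*} [MeasurableSpace Ω] [MeasurableSpace β] [MeasurableSpace γ]
  {μ : Measure Ω}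

theorem IndepFun.measure_setOf_eq_lintegral [IsFiniteMeasure μ] {Z : Ω → β} {V : Ω → γ}
    (hZ : Measurable Z) (hV : Measurable V) (hZV : IndepFun Z V μ)
    {p : β → γ → Prop} (hp : MeasurableSet {x : β × γ | p x.1 x.2}) :
    μ {ω | p (Z ω) (V ω)} = ∫⁻ z, μ {ω | p z (V ω)} ∂μ.map Z := by
  have hmap := (indepFun_iff_map_prod_eq_prod_map_map hZ.aemeasurable hV.aemeasurable).1 hZV
  have hsec (z : β) : μ {ω | p z (V ω)} = μ.map V (Prod.mk z ⁻¹' {x | p x.1 x.2}) :=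
    (Measure.map_apply hV (measurable_prodMk_left hp)).symm
  simp_rw [hsec, ← Measure.prod_apply hp, ← hmap, Measure.map_apply (hZ.prodMk hV) hp]
  rfl

theorem IndepFun.measure_setOf_le_of_forall [IsFiniteMeasure μ] {Z : Ω → β} {V : Ω → γ}
    (hZ : Measurable Z) (hV : Measurable V) (hZV : IndepFun Z V μ)
    {p q : β → γ → Prop} (hp : MeasurableSet {x : β × γ | p x.1 x.2})
    (hq : MeasurableSet {x : β × γ | q x.1 x.2})
    (hpq : ∀ z, μ {ω | p z (V ω)} ≤ μ {ω | q z (V ω)}) :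
    μ {ω | p (Z ω) (V ω)} ≤ μ {ω | q (Z ω) (V ω)} := by
  rw [hZV.measure_setOf_eq_lintegral hZ hV hp, hZV.measure_setOf_eq_lintegral hZ hV hq]
  exact lintegral_mono hpq

theorem measure_forall_le_le_of_identDistrib {ι : Type*} [Finite ι] [Nonempty ι]
    {Y : ι → Ω → ℝ} {i₀ : ι} (hY : ∀ i, IdentDistrib (Y i) (Y i₀) μ μ) (c : ι → ℝ) :
    μ {ω | ∀ i, Y i ω ≤ c i} ≤ μ {ω | ∀ i, Y i₀ ω ≤ c i} := by
  obtain ⟨j, hj⟩ := Finite.exists_min c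
  have hmin : {ω | ∀ i, Y i₀ ω ≤ c i} = Y i₀ ⁻¹' Set.Iic (c j) := by
    ext ω
    exact ⟨fun h => h j, fun h i => h.trans (hj i)⟩
  calc μ {ω | ∀ i, Y i ω ≤ c i} ≤ μ (Y j ⁻¹' Set.Iic (c j)) := measure_mono fun ω h => h j
    _ = μ {ω | ∀ i, Y i₀ ω ≤ c i} := by rw [hmin, (hY j).measure_mem_eq measurableSet_Iic]

theorem measure_sup'_add_mul_le_le_of_identDistrib {ι : Type*} [Fintype ι]
    (hne : (Finset.univ : Finset ι).Nonempty) {Y : ι → Ω → ℝ} {i₀ : ι}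
    (hY : ∀ i, IdentDistrib (Y i) (Y i₀) μ μ) {a : ι → ℝ} (ha : ∀ i, 0 < a i) (x : ι → ℝ)
    (t : ℝ) :
    μ {ω | Finset.univ.sup' hne (fun i => x i + a i * Y i ω) ≤ t}
      ≤ μ {ω | Finset.univ.sup' hne (fun i => x i + a i * Y i₀ ω) ≤ t} := by
  have : Nonempty ι := Finset.univ_nonempty_iff.mp hne
  have hthr (y : ι → ℝ) : Finset.univ.sup' hne (fun i => x i + a i * y i) ≤ t
      ↔ ∀ i, y i ≤ (t - x i) / a i := by
    simp only [Finset.sup'_le_iff, Finset.mem_univ, true_imp_iff]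
    refine forall_congr' fun i => ?_
    rw [le_div_iff₀ (ha i)]
    constructor <;> intro h <;> linarith
  simpa only [hthr (fun i => Y i _), hthr (fun _ => Y i₀ _)]
    using measure_forall_le_le_of_identDistrib hY fun i => (t - x i) / a i

end ProbabilityTheory

theorem stmt_3_general {Ω : Type*} [MeasureSpace Ω] [IsProbabilityMeasure (ℙ : Measure Ω)]
    (Q : ℕ) (hQ : 0 < Q) (X : Fin Q → Ω → ℝ) (W : Ω → ℝ) (a : Fin Q → ℝ)
    (ha_pos : ∀ i, 0 < a i)
    (Y : Fin Q → Ω → ℝ)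
    (hXmeas : ∀ i, Measurable (X i)) (hWmeas : Measurable W) (hYmeas : ∀ i, Measurable (Y i))
    (hYident : ∀ i j, IdentDistrib (Y i) (Y j) ℙ ℙ)
    (hindep : IndepFun (fun ω => (fun i => X i ω, W ω)) (fun ω i => Y i ω) ℙ)
    (hne : (Finset.univ : Finset (Fin Q)).Nonempty) :
    (∀ t : ℝ,
        ℙ {ω | (Finset.univ.sup' hne fun i => X i ω + a i * Y i ω) ≤ t}
          ≤ ℙ {ω | (Finset.univ.sup' hne fun i => X i ω + a i * Y ⟨0, hQ⟩ ω) ≤ t}) ∧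
      ∀ t : ℝ,
        ℙ {ω | max (Finset.univ.sup' hne fun i => X i ω + a i * Y i ω) (W ω) ≤ t}
          ≤ ℙ {ω | max (Finset.univ.sup' hne fun i => X i ω + a i * Y ⟨0, hQ⟩ ω) (W ω) ≤ t} := by
  have hY (i) : IdentDistrib (Y i) (Y ⟨0, hQ⟩) ℙ ℙ := hYident i _
  have hZ : Measurable fun ω => (fun i => X i ω, W ω) := by fun_prop
  have hV : Measurable fun ω i => Y i ω := by fun_prop
  refine ⟨fun t => ?_, fun t => ?_⟩
  · refine hindep.measure_setOf_le_of_forall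
      (p := fun z y => Finset.univ.sup' hne (fun i => z.1 i + a i * y i) ≤ t)
      (q := fun z y => Finset.univ.sup' hne (fun i => z.1 i + a i * y ⟨0, hQ⟩) ≤ t)
      hZ hV (measurableSet_le (by fun_prop) measurable_const)
      (measurableSet_le (by fun_prop) measurable_const) fun z => ?_
    exact measure_sup'_add_mul_le_le_of_identDistrib hne hY ha_pos z.1 t
  · refine hindep.measure_setOf_le_of_forall
      (p := fun z y => max (Finset.univ.sup' hne fun i => z.1 i + a i * y i) z.2 ≤ t)
      (q := fun z y => max (Finset.univ.sup' hne fun i => z.1 i + a i * y ⟨0, hQ⟩) z.2 ≤ t)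
      hZ hV (measurableSet_le (by fun_prop) measurable_const)
      (measurableSet_le (by fun_prop) measurable_const) fun z => ?_
    by_cases hw : z.2 ≤ t
    · simpa only [max_le_iff, hw, and_true]
        using measure_sup'_add_mul_le_le_of_identDistrib hne hY ha_pos z.1 t
    · simp only [max_le_iff, hw, and_false, Set.ofPred_false, le_refl]

theorem stmt_3 {Ω : Type*} [MeasureSpace Ω] [IsProbabilityMeasure (ℙ : Measure Ω)]
    (Q : ℕ) (hQ : 0 < Q) (X : Fin Q → Ω → ℝ) (W : Ω → ℝ) (a : Fin Q → ℝ)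
    (ha_pos : ∀ i, 0 < a i) (ha_mono : ∀ i j : Fin Q, i < j → a j < a i)
    (Y : Fin Q → Ω → ℝ)
    (hXmeas : ∀ i, Measurable (X i)) (hWmeas : Measurable W) (hYmeas : ∀ i, Measurable (Y i))
    (hYindep : iIndepFun Y ℙ)
    (hYident : ∀ i j, IdentDistrib (Y i) (Y j) ℙ ℙ)
    (hindep : IndepFun (fun ω => (fun i => X i ω, W ω)) (fun ω i => Y i ω) ℙ)
    (hne : (Finset.univ : Finset (Fin Q)).Nonempty) :
    (∀ t : ℝ,
        ℙ {ω | (Finset.univ.sup' hne fun i => X i ω + a i * Y i ω) ≤ t}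
          ≤ ℙ {ω | (Finset.univ.sup' hne fun i => X i ω + a i * Y ⟨0, hQ⟩ ω) ≤ t}) ∧
      ∀ t : ℝ,
        ℙ {ω | max (Finset.univ.sup' hne fun i => X i ω + a i * Y i ω) (W ω) ≤ t}
          ≤ ℙ {ω | max (Finset.univ.sup' hne fun i => X i ω + a i * Y ⟨0, hQ⟩ ω) (W ω) ≤ t} :=
  stmt_3_general Q hQ X W a ha_pos Y hXmeas hWmeas hYmeas hYident hindep hne
end

section
/- Let $(Z_k)_{k=1}^{K}$ be real-valued random variables (not necessarily independent), each with mean $\mu$ and variance $\operatorname{Var}(Z_k) \le v$. Then $|\mathbb{E}[\max_{1 \le k \le K} Z_k] - \mu| \le \sqrt{(1 - 1/K) \cdot K v} = \sqrt{(K-1) v}$. -/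
open MeasureTheory ProbabilityTheory Finset

/-! Each coordinate of `y : ι → ℝ` exceeds the average of the coordinates by at most
`√((1 - 1/n) ∑ yᵢ²)`, by Cauchy–Schwarz on the other `n - 1` coordinates. Applied at the maximal
coordinate of `Zₖ(ω) - μ`, the average term has mean zero, and Jensen's inequality for the concave
`√` bounds the expectation of the square root by `√((1 - 1/K) ∑ₖ Var Zₖ) ≤ √((K - 1) v)`.
The lower bound `E[max Zₖ] ≥ E[Z₁] = μ` is immediate. -/

lemma sub_mean_le_sqrt_sum_sq {ι : Type*} [Fintype ι] (y : ι → ℝ) (j : ι) :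
    y j - (∑ i, y i) / Fintype.card ι ≤ √((1 - 1 / Fintype.card ι) * ∑ i, y i ^ 2) := by
  classical
  set n : ℕ := Fintype.card ι
  have hn : 0 < n := Fintype.card_pos_iff.mpr ⟨j⟩
  have hcs := sq_sum_le_card_mul_sum_sq (s := univ.erase j) (f := y)
  rw [card_erase_of_mem (mem_univ j), card_univ, Nat.cast_sub hn, Nat.cast_one] at hcs
  rw [← add_sum_erase _ _ (mem_univ j), ← add_sum_erase _ _ (mem_univ j)]
  apply Real.le_sqrt_of_sq_le
  have hn1 : (1 : ℝ) ≤ n := by exact_mod_cast hn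
  field_simp
  -- with a = y j and s = ∑_{i ≠ j} y i, Cauchy–Schwarz (n - 1) ∑_{i ≠ j} y i ^ 2 ≥ s ^ 2 leaves
  -- a slack of (n - 1) (a + s) ^ 2
  nlinarith [mul_nonneg (sub_nonneg.2 hn1) (sq_nonneg (y j + ∑ i ∈ univ.erase j, y i))]

section

variable {Ω : Type*} [MeasurableSpace Ω] {μ : Measure Ω}

lemma integrable_finset_sup' {ι : Type*} {s : Finset ι} (hs : s.Nonempty) {Z : ι → Ω → ℝ}
    (hZ : ∀ k ∈ s, Integrable (Z k) μ) : Integrable (fun ω => s.sup' hs (fun k => Z k ω)) μ := by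
  simp_rw [← Finset.sup'_apply]
  exact Finset.sup'_induction hs Z (p := (Integrable · μ)) (fun _ hf _ hg => hf.sup hg) hZ

theorem MeasureTheory.Integrable.sqrt [IsFiniteMeasure μ] {f : Ω → ℝ} (hf : Integrable f μ)
    (hf0 : 0 ≤ᵐ[μ] f) :
    Integrable (fun ω => √(f ω)) μ := by
  refine ((memLp_two_iff_integrable_sq
    (Real.continuous_sqrt.comp_aestronglyMeasurable hf.aestronglyMeasurable)).2 ?_).integrable
    one_le_two
  refine hf.congr ?_
  filter_upwards [hf0] with ω hω
  exact (Real.sq_sqrt hω).symm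

variable [IsProbabilityMeasure μ]

lemma integral_sqrt_le_sqrt_integral {f : Ω → ℝ} (hf : Integrable f μ) (hf0 : 0 ≤ᵐ[μ] f) :
    ∫ ω, √(f ω) ∂μ ≤ √(∫ ω, f ω ∂μ) :=
  Real.strictConcaveOn_sqrt.concaveOn.le_map_integral Real.continuous_sqrt.continuousOn
    isClosed_Ici hf0 hf (hf.sqrt hf0)

lemma integral_sum_sq_sub_eq_sum_variance {ι : Type*} [Fintype ι] {Z : ι → Ω → ℝ}
    (hZ : ∀ k, MemLp (Z k) 2 μ) {m : ℝ} (hmean : ∀ k, ∫ ω, Z k ω ∂μ = m) :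
    ∫ ω, ∑ k, (Z k ω - m) ^ 2 ∂μ = ∑ k, variance (Z k) μ := by
  have hY2 (k : ι) : Integrable (fun ω => (Z k ω - m) ^ 2) μ :=
    ((hZ k).sub (memLp_const m)).integrable_sq
  rw [integral_finsetSum _ fun k _ => hY2 k]
  refine sum_congr rfl fun k _ => ?_
  rw [variance_eq_integral (hZ k).aemeasurable, hmean k]

theorem integral_sup'_sub_le_sqrt_sum_variance {ι : Type*} [Fintype ι]
    (hne : (univ : Finset ι).Nonempty) (Z : ι → Ω → ℝ) (hZ : ∀ k, MemLp (Z k) 2 μ) (m : ℝ)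
    (hmean : ∀ k, ∫ ω, Z k ω ∂μ = m) :
    ∫ ω, univ.sup' hne (fun k => Z k ω) ∂μ - m
      ≤ √((1 - 1 / Fintype.card ι) * ∑ k, variance (Z k) μ) := by
  set c : ℝ := 1 - 1 / Fintype.card ι
  have hY : ∀ k, Integrable (fun ω => Z k ω - m) μ :=
    fun k => ((hZ k).integrable one_le_two).sub (integrable_const m)
  have hpt : ∀ ω, univ.sup' hne (fun k => Z k ω) ≤
      m + (∑ k, (Z k ω - m)) / Fintype.card ι + √(c * ∑ k, (Z k ω - m) ^ 2) := by
    intro ω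
    obtain ⟨j, -, hj⟩ := exists_mem_eq_sup' hne (fun k => Z k ω)
    have := sub_mean_le_sqrt_sum_sq (fun k => Z k ω - m) j
    rw [hj]
    linarith
  have hS : Integrable (fun ω => c * ∑ k, (Z k ω - m) ^ 2) μ :=
    (integrable_finsetSum _ fun k _ => ((hZ k).sub (memLp_const m)).integrable_sq).const_mul c
  have hc : 0 ≤ c :=
    sub_nonneg.2 (div_le_one_of_le₀ (by exact_mod_cast hne.card_pos) (by positivity))
  have hS0 : 0 ≤ᵐ[μ] fun ω => c * ∑ k, (Z k ω - m) ^ 2 :=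
    Filter.Eventually.of_forall fun ω => by positivity
  have hmean_sum : ∫ ω, (∑ k, (Z k ω - m)) / Fintype.card ι ∂μ = 0 := by
    rw [integral_div, integral_finsetSum _ fun k _ => hY k]
    simp [integral_sub ((hZ _).integrable one_le_two) (integrable_const m), hmean]
  have hmean_int : Integrable (fun ω => (∑ k, (Z k ω - m)) / Fintype.card ι) μ :=
    (integrable_finsetSum _ fun k _ => hY k).div_const _
  have hlin : Integrable (fun ω => m + (∑ k, (Z k ω - m)) / Fintype.card ι) μ :=
    (integrable_const m).add hmean_int
  calc ∫ ω, univ.sup' hne (fun k => Z k ω) ∂μ - m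
      ≤ ∫ ω, (m + (∑ k, (Z k ω - m)) / Fintype.card ι + √(c * ∑ k, (Z k ω - m) ^ 2)) ∂μ - m :=
        sub_le_sub_right (integral_mono
          (integrable_finset_sup' hne fun k _ => (hZ k).integrable one_le_two)
          (hlin.add (hS.sqrt hS0)) hpt) m
    _ = ∫ ω, √(c * ∑ k, (Z k ω - m) ^ 2) ∂μ := by
        rw [integral_add hlin (hS.sqrt hS0), integral_add (integrable_const m) hmean_int,
          hmean_sum, integral_const]
        simp
    _ ≤ _ := by
        rw [← integral_sum_sq_sub_eq_sum_variance hZ hmean, ← integral_const_mul]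
        exact integral_sqrt_le_sqrt_integral hS hS0

end
theorem stmt_11_general {Ω : Type*} [MeasureSpace Ω] [IsProbabilityMeasure (ℙ : Measure Ω)]
    (K : ℕ) (hne : (Finset.univ : Finset (Fin K)).Nonempty)
    (Z : Fin K → Ω → ℝ) (hL2 : ∀ k, MemLp (Z k) 2)
    (μc : ℝ) (hmean : ∀ k, ∫ ω, Z k ω ∂ℙ = μc)
    (v : ℝ) (hvar : ∀ k, variance (Z k) ℙ ≤ v) :
    |(∫ ω, Finset.univ.sup' hne (fun k => Z k ω) ∂ℙ) - μc| ≤ Real.sqrt ((K - 1) * v) := by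
  have hK : 0 < K := by simpa using hne.card_pos
  have hK1 : (1 : ℝ) ≤ K := by exact_mod_cast hK
  have hupper := integral_sup'_sub_le_sqrt_sum_variance hne Z hL2 μc hmean
  rw [Fintype.card_fin] at hupper
  have hvar_sum : (1 - 1 / (K : ℝ)) * ∑ k, variance (Z k) ℙ ≤ (K - 1) * v := calc
    _ ≤ (1 - 1 / (K : ℝ)) * (K * v) := by
      gcongr
      · exact sub_nonneg.2 (div_le_one_of_le₀ hK1 (Nat.cast_nonneg K))
      · simpa using sum_le_sum fun k (_ : k ∈ univ) => hvar k
    _ = (K - 1) * v := by field_simp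
  have hlower : μc ≤ ∫ ω, univ.sup' hne (fun k => Z k ω) ∂ℙ :=
    hmean ⟨0, hK⟩ ▸ integral_mono ((hL2 ⟨0, hK⟩).integrable one_le_two)
      (integrable_finset_sup' hne fun k _ => (hL2 k).integrable one_le_two)
      fun ω => le_sup' (fun k => Z k ω) (mem_univ _)
  rw [abs_sub_le_iff]
  constructor
  · exact hupper.trans (Real.sqrt_le_sqrt hvar_sum)
  · linarith [Real.sqrt_nonneg ((K - 1) * v)]

theorem stmt_11 {Ω : Type*} [MeasureSpace Ω] [IsProbabilityMeasure (ℙ : Measure Ω)]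
    (K : ℕ) (hK : 0 < K) (hne : (Finset.univ : Finset (Fin K)).Nonempty)
    (Z : Fin K → Ω → ℝ) (hmeas : ∀ k, Measurable (Z k)) (hL2 : ∀ k, MemLp (Z k) 2)
    (μc : ℝ) (hmean : ∀ k, ∫ ω, Z k ω ∂ℙ = μc)
    (v : ℝ) (hvar : ∀ k, variance (Z k) ℙ ≤ v) :
    |(∫ ω, Finset.univ.sup' hne (fun k => Z k ω) ∂ℙ) - μc| ≤ Real.sqrt ((K - 1) * v) :=
  stmt_11_general K hne Z hL2 μc hmean v hvar
end
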